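/- (Perturbed dual problem.) Let λ ≥ 0, δ ≥ 0, let A be a real m×n matrix, b̃ ∈ ℝᵐ, and y ∈ ℝᵐ. Then ⟨y, b̃⟩ − δ‖y‖ − ½‖S_λ(Aᵀy)‖² is the least element of the set {f(x) − ⟨y, Ax + c − b̃⟩ : x ∈ ℝⁿ, c ∈ ℝᵐ, ‖c‖ ≤ δ}; equivalently, the Lagrangian dual function of the problem min f(x) subject to Ax = b̃ − c, ‖c‖ ≤ δ equals −½‖S_λ(Aᵀy)‖² + ⟨y, b̃⟩ − δ‖y‖, and the defining infimum is attained. -/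

import Mathlib

open scoped RealInnerProductSpace BigOperators
open Matrix

noncomputable def fobj {n : ℕ} (lam : ℝ) (x : EuclideanSpace ℝ (Fin n)) : ℝ :=
  lam * (∑ i, |x i|) + (1 / 2) * ‖x‖ ^ 2

noncomputable def softShrink {n : ℕ} (lam : ℝ) (x : EuclideanSpace ℝ (Fin n)) :
    EuclideanSpace ℝ (Fin n) :=
  WithLp.toLp 2 (fun i => Real.sign (x i) * max (|x i| - lam) 0)

noncomputable def mulVecE {m n : ℕ} (A : Matrix (Fin m) (Fin n) ℝ)
    (x : EuclideanSpace ℝ (Fin n)) : EuclideanSpace ℝ (Fin m) :=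
  Matrix.toEuclideanLin A x

lemma sq_shrink (lam v : ℝ) (hlam : 0 ≤ lam) :
    (Real.sign v * max (|v| - lam) 0)^2 = (max (|v| - lam) 0)^2 := by
  rcases lt_trichotomy v 0 with h | h | h
  · rw [Real.sign_of_neg h]; ring
  · simp [h, max_eq_right (by linarith : -lam ≤ 0)]
  · rw [Real.sign_of_pos h]; ring

lemma scalar_lb (lam v : ℝ) (hlam : 0 ≤ lam) (t : ℝ) :
    -(1/2) * (max (|v| - lam) 0)^2 ≤ lam * |t| + (1/2) * t^2 - v * t := by
  have h1 : v * t ≤ |v| * |t| := by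
    calc v * t ≤ |v * t| := le_abs_self _
    _ = |v| * |t| := abs_mul v t
  have ht : t^2 = |t|^2 := (sq_abs t).symm
  rcases le_or_gt |v| lam with h | h
  · rw [max_eq_right (by linarith)]
    nlinarith [abs_nonneg t, sq_nonneg t]
  · rw [max_eq_left (by linarith)]
    nlinarith [sq_nonneg (|t| - (|v| - lam))]

lemma scalar_eq (lam v : ℝ) (hlam : 0 ≤ lam) :
    lam * |Real.sign v * max (|v| - lam) 0| + (1/2) * (Real.sign v * max (|v| - lam) 0)^2
      - v * (Real.sign v * max (|v| - lam) 0) = -(1/2) * (max (|v| - lam) 0)^2 := by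
  rcases le_or_gt |v| lam with h | h
  · rw [max_eq_right (by linarith)]; simp
  · rw [max_eq_left (by linarith)]
    have hv : v ≠ 0 := by intro h0; rw [h0] at h; simp at h; linarith
    rcases hv.lt_or_gt with hneg | hpos
    · rw [abs_of_neg hneg] at h ⊢; rw [Real.sign_of_neg hneg]
      rw [abs_of_nonpos (by nlinarith)]
      ring
    · rw [abs_of_pos hpos] at h ⊢; rw [Real.sign_of_pos hpos]
      rw [abs_of_nonneg (by nlinarith)]
      ring

lemma inner_sum' {n : ℕ} (x y : EuclideanSpace ℝ (Fin n)) : ⟪x, y⟫ = ∑ i, x i * y i := by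
  simp [PiLp.inner_apply, RCLike.inner_apply, mul_comm]

lemma norm_sq_sum' {n : ℕ} (x : EuclideanSpace ℝ (Fin n)) : ‖x‖^2 = ∑ i, (x i)^2 := by
  rw [EuclideanSpace.norm_eq, Real.sq_sqrt (by positivity)]
  simp [sq_abs]

lemma mulVecE_apply {m n : ℕ} (A : Matrix (Fin m) (Fin n) ℝ) (x : EuclideanSpace ℝ (Fin n))
    (i : Fin m) : mulVecE A x i = ∑ j, A i j * x j := by
  simp [mulVecE, Matrix.toEuclideanLin_apply, Matrix.mulVec, dotProduct]

/-- Perturbed dual problem: the Lagrangian dual function of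
`min f(x) s.t. Ax = b̃ − c, ‖c‖ ≤ δ` equals `⟨y,b̃⟩ − δ‖y‖ − ½‖S_λ(Aᵀy)‖²`,
i.e. this value is the least element of
`{f(x) − ⟨y, Ax + c − b̃⟩ : x ∈ ℝⁿ, c ∈ ℝᵐ, ‖c‖ ≤ δ}` (the infimum is attained). -/
theorem perturbed_dual_function {m n : ℕ} (lam δ : ℝ) (hlam : 0 ≤ lam) (hδ : 0 ≤ δ)
    (A : Matrix (Fin m) (Fin n) ℝ) (btil y : EuclideanSpace ℝ (Fin m)) :
    IsLeast
      {r : ℝ | ∃ (x : EuclideanSpace ℝ (Fin n)) (c : EuclideanSpace ℝ (Fin m)),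
        ‖c‖ ≤ δ ∧ r = fobj lam x - ⟪y, mulVecE A x + c - btil⟫}
      (⟪y, btil⟫ - δ * ‖y‖ - (1 / 2) * ‖softShrink lam (mulVecE Aᵀ y)‖ ^ 2) := by
  set v : EuclideanSpace ℝ (Fin n) := mulVecE Aᵀ y with hv
  set s : EuclideanSpace ℝ (Fin n) := softShrink lam v with hs
  have hadj : ∀ x : EuclideanSpace ℝ (Fin n), ⟪y, mulVecE A x⟫ = ∑ j, v j * x j := by
    intro x
    rw [inner_sum']
    simp only [mulVecE_apply, hv, Matrix.transpose_apply, Finset.mul_sum, Finset.sum_mul]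
    rw [Finset.sum_comm]
    apply Finset.sum_congr rfl; intro j _
    apply Finset.sum_congr rfl; intro i _
    ring
  have key : ∀ (x : EuclideanSpace ℝ (Fin n)) (c : EuclideanSpace ℝ (Fin m)),
      fobj lam x - ⟪y, mulVecE A x + c - btil⟫ =
      (∑ i, (lam * |x i| + (1/2) * (x i)^2 - v i * x i)) - ⟪y, c⟫ + ⟪y, btil⟫ := by
    intro x c
    rw [inner_sub_right, inner_add_right, hadj x, fobj, norm_sq_sum']
    rw [Finset.sum_sub_distrib, Finset.sum_add_distrib]
    simp only [← Finset.mul_sum]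
    ring
  have hsum_eq : ∑ i, (lam * |s i| + (1/2) * (s i)^2 - v i * s i)
      = -(1/2) * ‖s‖^2 := by
    rw [norm_sq_sum', Finset.mul_sum]
    apply Finset.sum_congr rfl; intro i _
    simp only [hs, softShrink]
    rw [scalar_eq lam (v i) hlam, sq_shrink lam (v i) hlam]
  constructor
  · refine ⟨s, (δ / ‖y‖) • y, ?_, ?_⟩
    · rw [norm_smul]
      rcases eq_or_ne y 0 with h0 | h0
      · simp [h0, hδ]
      · have : ‖y‖ ≠ 0 := norm_ne_zero_iff.mpr h0
        rw [Real.norm_eq_abs, abs_of_nonneg (by positivity), div_mul_cancel₀ _ this]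
    · rw [key, hsum_eq, real_inner_smul_right, real_inner_self_eq_norm_sq]
      rcases eq_or_ne y 0 with h0 | h0
      · simp [h0]
      · have : ‖y‖ ≠ 0 := norm_ne_zero_iff.mpr h0
        field_simp
        ring
  · rintro r ⟨x, c, hc, rfl⟩
    rw [key]
    have h1 : ∑ i, (-(1/2) * (max (|v i| - lam) 0)^2)
        ≤ ∑ i, (lam * |x i| + (1/2) * (x i)^2 - v i * x i) :=
      Finset.sum_le_sum fun i _ => scalar_lb lam (v i) hlam (x i)
    have h2 : ∑ i, (-(1/2) * (max (|v i| - lam) 0)^2) = -(1/2) * ‖s‖^2 := by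
      rw [norm_sq_sum', Finset.mul_sum]
      apply Finset.sum_congr rfl; intro i _
      simp only [hs, softShrink]
      rw [sq_shrink lam (v i) hlam]
    have h3 : ⟪y, c⟫ ≤ δ * ‖y‖ := by
      calc ⟪y, c⟫ ≤ ‖y‖ * ‖c‖ := real_inner_le_norm y c
      _ ≤ ‖y‖ * δ := mul_le_mul_of_nonneg_left hc (norm_nonneg y)
      _ = δ * ‖y‖ := mul_comm _ _
    rw [h2] at h1
    linarith
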